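/- Let E ⊆ K[X] and 𝔖 ⊆ TO(M). Let ∼_E be the equivalence relation on MIN_E(𝔖) defined by ≤ ∼_E ≤' if and only if LM_≤(E) = LM_{≤'}(E). Then the quotient space MIN_E(𝔖)/∼_E, with the quotient topology, is discrete. Hence, if 𝔖 is closed in TO(M), then MIN_E(𝔖)/∼_E is finite. -/

import Mathlib

/-- A binary relation is a total ordering: antisymmetric, transitive, and total. -/
def IsTotalOrdering {S : Type*} (r : S → S → Prop) : Prop :=
  (∀ a b, r a b → r b a → a = b) ∧ (∀ a b c, r a b → r b c → r a c) ∧ (∀ a b, r a b ∨ r b a)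

/-- The set `TO(S)` of all total orderings on `S`. -/
def TO (S : Type*) : Type _ := {r : S → S → Prop // IsTotalOrdering r}

/-- The topology `𝒰(S)` on `TO(S)`, generated by the subbasis of all sets
`U_{(a,b)} = {≤ ∈ TO(S) : a ≤ b}`. -/
instance TOTopology (S : Type*) : TopologicalSpace (TO S) :=
  TopologicalSpace.generateFrom {U | ∃ a b : S, U = {r : TO S | r.1 a b}}
/-- Monomials of `K[X_1,…,X_t]`, identified with their exponent vectors `ν ∈ ℕ^t`. -/
abbrev Mon (t : ℕ) := Fin t →₀ ℕ

/-- `LM` is a leading-monomial function: for each total ordering `r` on monomials and each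
nonzero polynomial `p`, `LM r p` is the `r`-maximal element of the support of `p`. -/
def IsLM (K : Type*) [Field K] (t : ℕ)
    (LM : TO (Mon t) → MvPolynomial (Fin t) K → Mon t) : Prop :=
  ∀ (r : TO (Mon t)) (p : MvPolynomial (Fin t) K), p ≠ 0 →
    LM r p ∈ p.support ∧ ∀ m ∈ p.support, r.1 m (LM r p)

/-- The leading monomial ideal `LM_≤(E)` of a subset `E ⊆ K[X]`: the ideal generated by the
leading monomials of the nonzero elements of `E`. -/
noncomputable def LMideal (K : Type*) [Field K] (t : ℕ)
    (LM : TO (Mon t) → MvPolynomial (Fin t) K → Mon t)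
    (r : TO (Mon t)) (E : Set (MvPolynomial (Fin t) K)) : Ideal (MvPolynomial (Fin t) K) :=
  Ideal.span {q | ∃ e ∈ E, e ≠ 0 ∧ q = MvPolynomial.monomial (LM r e) (1 : K)}

/-- `MIN_E(𝔖)`: the set of orderings `≤ ∈ 𝔖` such that `LM_≤(E)` is minimal with respect to
inclusion among the leading monomial ideals `{LM_≤'(E) : ≤' ∈ 𝔖}`. -/
def MINset (K : Type*) [Field K] (t : ℕ)
    (LM : TO (Mon t) → MvPolynomial (Fin t) K → Mon t)
    (E : Set (MvPolynomial (Fin t) K)) (S : Set (TO (Mon t))) : Set (TO (Mon t)) :=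
  {r | r ∈ S ∧ ∀ r' ∈ S, LMideal K t LM r' E ≤ LMideal K t LM r E →
    LMideal K t LM r' E = LMideal K t LM r E}

/-- The equivalence relation `∼_E` on `MIN_E(𝔖)`: `≤ ∼_E ≤'` iff `LM_≤(E) = LM_{≤'}(E)`. -/
def minSetoid (K : Type*) [Field K] (t : ℕ)
    (LM : TO (Mon t) → MvPolynomial (Fin t) K → Mon t)
    (E : Set (MvPolynomial (Fin t) K)) (S : Set (TO (Mon t))) :
    Setoid ↥(MINset K t LM E S) :=
  ⟨fun x y => LMideal K t LM x.1 E = LMideal K t LM y.1 E,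
   ⟨fun _ => rfl, fun h => h.symm, fun h h' => h.trans h'⟩⟩

/-!
Call `f(≤) = LM_≤(E)`. Each ordering `≤` has a neighbourhood on which `f` can only grow: by
Hilbert's basis theorem `f(≤)` is generated by the leading monomials of finitely many `e ∈ E`,
and `LM_≤(e)` stays the same for all orderings that put the finitely many monomials of `e` below
it, which is a finite intersection of subbasic open sets. On the minimal orderings `f` is
therefore locally constant, so its fibres, the classes of `∼_E`, are open. If `𝔖` is closed it
is compact, because `TO(M)` is (an ultrafilter converges to the ordering it decides), so finitely
many such neighbourhoods cover `𝔖`, and every minimal value of `f` is one of their finitely many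
centre values.
-/

open Topology

namespace TO

variable {S : Type*}

lemma isOpen_setOf_rel (a b : S) : IsOpen {r : TO S | r.1 a b} :=
  TopologicalSpace.isOpen_generateFrom_of_mem ⟨a, b, rfl⟩

lemma isTotalOrdering_ultrafilter_lim (F : Ultrafilter (TO S)) :
    IsTotalOrdering fun a b => {r : TO S | r.1 a b} ∈ F := by
  refine ⟨fun a b hab hba => ?_, fun a b c hab hbc => ?_, fun a b => ?_⟩
  · obtain ⟨r, hrab, hrba⟩ := F.nonempty_of_mem (F.inter_mem hab hba)
    exact r.2.1 a b hrab hrba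
  · filter_upwards [hab, hbc] with r hrab hrbc using r.2.2.1 a b c hrab hrbc
  · exact Ultrafilter.union_mem_iff.1 (Filter.univ_mem' fun r => r.2.2.2 a b)

instance compactSpace : CompactSpace (TO S) := by
  refine ⟨isCompact_iff_ultrafilter_le_nhds.2 fun F _ => ?_⟩
  refine ⟨⟨_, isTotalOrdering_ultrafilter_lim F⟩, Set.mem_univ _, ?_⟩
  exact TopologicalSpace.tendsto_nhds_generateFrom_iff.2 fun _ ⟨_, _, hU⟩ hr => hU ▸ hr

end TO

section MinimalValues

variable {X α : Type*} [TopologicalSpace X] [PartialOrder α] {f : X → α} {S : Set X}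

lemma isLocallyConstant_domRestrict_minimal (hf : ∀ x, ∀ᶠ y in 𝓝 x, f x ≤ f y) :
    IsLocallyConstant ({x | x ∈ S ∧ ∀ y ∈ S, f y ≤ f x → f y = f x}.domRestrict f) := by
  refine (IsLocallyConstant.iff_eventually_eq _).2 fun x => ?_
  have hx : ∀ᶠ y in 𝓝 x, f x ≤ f y.1 := continuous_subtype_val.continuousAt.eventually (hf x.1)
  filter_upwards [hx] with y hxy using (y.2.2 x.1 x.2.1 hxy).symm

lemma IsCompact.finite_image_minimal (hS : IsCompact S) (hf : ∀ x, ∀ᶠ y in 𝓝 x, f x ≤ f y) :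
    (f '' {x | x ∈ S ∧ ∀ y ∈ S, f y ≤ f x → f y = f x}).Finite := by
  obtain ⟨T, hTS, hcover⟩ := hS.elim_nhds_subcover (fun x => {y | f x ≤ f y}) fun x _ => hf x
  refine (T.finite_toSet.image f).subset ?_
  rintro _ ⟨x, ⟨hxS, hxmin⟩, rfl⟩
  obtain ⟨y, hyT, hyx⟩ := Set.mem_iUnion₂.1 (hcover hxS)
  exact ⟨y, hyT, hxmin y (hTS y hyT) hyx⟩

end MinimalValues

lemma IsLocallyConstant.discreteTopology_quotient_ker {X Y : Type*} [TopologicalSpace X]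
    {f : X → Y} (hf : IsLocallyConstant f) : DiscreteTopology (Quotient (Setoid.ker f)) := by
  refine discreteTopology_iff_isOpen_singleton.2 fun q => ?_
  obtain ⟨x, rfl⟩ := Quotient.exists_rep q
  rw [← isQuotientMap_quotient_mk'.isOpen_preimage]
  convert hf.isOpen_fiber (f x) using 1
  ext y
  exact Quotient.eq

lemma Ideal.exists_finite_subset_span_image_eq {R ι : Type*} [CommSemiring R]
    [IsNoetherianRing R] (f : ι → R) (s : Set ι) :
    ∃ u ⊆ s, u.Finite ∧ Ideal.span (f '' u) = Ideal.span (f '' s) := by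
  obtain ⟨v, hvs, hv⟩ :=
    (Submodule.fg_span_iff_fg_span_finset_subset (f '' s)).1 (Ideal.span _).fg_of_isNoetherianRing
  exact (Set.exists_subset_image_finite_and (p := fun w => Ideal.span w = Ideal.span (f '' s))).1
    ⟨v, hvs, v.finite_toSet, hv.symm⟩

section LeadingMonomials

variable {K : Type*} [Field K] {t : ℕ} {LM : TO (Mon t) → MvPolynomial (Fin t) K → Mon t}

lemma IsLM.LM_eq_iff (hLM : IsLM K t LM) {p : MvPolynomial (Fin t) K} (hp : p ≠ 0)
    {r r' : TO (Mon t)} : LM r' p = LM r p ↔ ∀ m ∈ p.support, r'.1 m (LM r p) := by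
  refine ⟨fun h => h ▸ (hLM r' p hp).2, fun h => ?_⟩
  exact r'.2.1 _ _ (h _ (hLM r' p hp).1) ((hLM r' p hp).2 _ (hLM r p hp).1)

lemma IsLM.eventually_LM_eq (hLM : IsLM K t LM) {p : MvPolynomial (Fin t) K} (hp : p ≠ 0)
    (r : TO (Mon t)) : ∀ᶠ r' in 𝓝 r, LM r' p = LM r p := by
  simp_rw [hLM.LM_eq_iff hp, Filter.eventually_all_finset]
  exact fun m hm => (TO.isOpen_setOf_rel m (LM r p)).mem_nhds ((hLM r p hp).2 m hm)

lemma LMideal_eq_span_image (r : TO (Mon t)) (E : Set (MvPolynomial (Fin t) K)) :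
    LMideal K t LM r E =
      Ideal.span ((fun e => MvPolynomial.monomial (LM r e) (1 : K)) '' (E \ {0})) := by
  unfold LMideal
  congr 1
  ext q
  simp [eq_comm, and_assoc]

lemma IsLM.eventually_LMideal_le (hLM : IsLM K t LM) (E : Set (MvPolynomial (Fin t) K))
    (r : TO (Mon t)) : ∀ᶠ r' in 𝓝 r, LMideal K t LM r E ≤ LMideal K t LM r' E := by
  obtain ⟨u, huE, hu, hspan⟩ := Ideal.exists_finite_subset_span_image_eq
    (fun e => MvPolynomial.monomial (LM r e) (1 : K)) (E \ {0})
  filter_upwards [(Filter.eventually_all_finite hu).2 fun e he =>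
    hLM.eventually_LM_eq (huE he).2 r] with r' hr'
  rw [LMideal_eq_span_image, ← hspan, Ideal.span_le, LMideal_eq_span_image]
  rintro _ ⟨e, he, rfl⟩
  exact Ideal.subset_span ⟨e, huE he, congrArg (MvPolynomial.monomial · 1) (hr' e he)⟩

end LeadingMonomials

theorem minQuotient_discrete_finite_general (K : Type*) [Field K] (t : ℕ)
    (LM : TO (Mon t) → MvPolynomial (Fin t) K → Mon t) (hLM : IsLM K t LM)
    (E : Set (MvPolynomial (Fin t) K)) (S : Set (TO (Mon t))) :
    DiscreteTopology (Quotient (minSetoid K t LM E S)) ∧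
    (IsClosed S → Finite (Quotient (minSetoid K t LM E S))) := by
  have hmono := hLM.eventually_LMideal_le E
  have hker : minSetoid K t LM E S =
      Setoid.ker ((MINset K t LM E S).domRestrict fun r => LMideal K t LM r E) := rfl
  rw [hker]
  refine ⟨(isLocallyConstant_domRestrict_minimal hmono).discreteTopology_quotient_ker,
    fun hS => ?_⟩
  have hfin := hS.isCompact.finite_image_minimal hmono
  rw [← Set.range_domRestrict] at hfin
  exact @Finite.of_equiv _ _ hfin.to_subtype (Setoid.quotientKerEquivRange _).symm

/-- The quotient space `MIN_E(𝔖)/∼_E` (with the quotient topology) is discrete; hence, if `𝔖`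
is closed in `TO(M)`, it is finite. -/
theorem minQuotient_discrete_finite (K : Type*) [Field K] (t : ℕ) (ht : 1 ≤ t)
    (LM : TO (Mon t) → MvPolynomial (Fin t) K → Mon t) (hLM : IsLM K t LM)
    (E : Set (MvPolynomial (Fin t) K)) (S : Set (TO (Mon t))) :
    DiscreteTopology (Quotient (minSetoid K t LM E S)) ∧
    (IsClosed S → Finite (Quotient (minSetoid K t LM E S))) :=
  minQuotient_discrete_finite_general K t LM hLM E S
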